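/- arXiv:1210.2580 — 7 statements merged into one kernel-verified Lean document; each statement's English description precedes it below -/
import Mathlib

section
/- For all real numbers α ≥ 1 and β ≥ 1, there exist positive integers n and δ ≥ 2 such that no schedule t of the tree T(n, δ) (on an unlimited number of processors, i.e., on |V| processors) satisfies both makespan(t) ≤ α·(δ+2) and peak memory(t) ≤ β·(n+δ). Since δ+2 is the minimum achievable makespan of T(n, δ) and n+δ is the minimum achievable sequential peak memory of T(n, δ), no algorithm can simultaneously be an α-approximation for makespan minimization and a β-approximation for peak-memory minimization when scheduling in-tree task graphs. -/
/-- A finite rooted in-tree: every node has a parent (the root is its own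
parent), and a rank function witnesses that following parents strictly
decreases towards the root, so every node has a unique path to the root. -/
structure InTree where
  V : Type
  [fin : Fintype V]
  [deq : DecidableEq V]
  root : V
  parent : V → V
  parent_root : parent root = root
  rk : V → ℕ
  rk_lt : ∀ v, v ≠ root → rk (parent v) < rk v
  rk_root : ∀ v, rk v = 0 → v = root

attribute [instance] InTree.fin InTree.deq

/-- A schedule of `T` on `p` processors: at most `p` tasks per unit time step,
and every non-root task finishes before its parent starts. -/
def InTree.IsSchedule (T : InTree) (p : ℕ) (t : T.V → ℕ) : Prop :=
  (∀ s : ℕ, (Finset.univ.filter (fun i => t i = s)).card ≤ p) ∧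
  (∀ i : T.V, i ≠ T.root → t i + 1 ≤ t (T.parent i))

/-- Makespan of a schedule: `max_i (t i + 1)`. -/
def InTree.makespan (T : InTree) (t : T.V → ℕ) : ℕ :=
  Finset.univ.sup (fun i => t i + 1)

/-- Memory used at step `s`: number of nodes `i` with `t i ≤ s` that are the
root or whose parent has not finished before step `s`. -/
def InTree.memAt (T : InTree) (t : T.V → ℕ) (s : ℕ) : ℕ :=
  (Finset.univ.filter (fun i : T.V => t i ≤ s ∧ (i = T.root ∨ s ≤ t (T.parent i)))).card

/-- Peak memory of a schedule: maximum memory usage over steps `0 ≤ s < makespan`. -/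
def InTree.peakMemory (T : InTree) (t : T.V → ℕ) : ℕ :=
  (Finset.range (T.makespan t)).sup (T.memAt t)


/-- Node set of the tree `T(n, δ)` used in the inapproximability proof:
a root; for each `i < n` a chain `cp^i_1, …, cp^i_{δ-1}` (index `j : Fin (δ-1)`
represents `cp^i_{j+1}`); for each `cp^i_j` a child `d^i_j`; for each `d^i_j`
its `δ - (j+1) + 1 = δ - j` leaf children; and two extra nodes `b^i_δ`,
`b^i_{δ+1}` below `cp^i_{δ-1}`. -/
abbrev TV (n δ : ℕ) : Type :=
  Unit ⊕ (Fin n × Fin (δ-1)) ⊕ (Fin n × Fin (δ-1)) ⊕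
    (Σ q : Fin n × Fin (δ-1), Fin (δ - q.2.val)) ⊕ (Fin n) ⊕ (Fin n)

/-- The tree `T(n, δ)` of the inapproximability proof. -/
def theTree (n δ : ℕ) (hδ : 2 ≤ δ) : InTree where
  V := TV n δ
  root := Sum.inl ()
  parent := fun v => match v with
    | Sum.inl _ => Sum.inl ()
    | Sum.inr (Sum.inl (i, j)) =>
        if h : j.val = 0 then Sum.inl ()
        else Sum.inr (Sum.inl (i, ⟨j.val - 1, by have := j.isLt; omega⟩))
    | Sum.inr (Sum.inr (Sum.inl (i, j))) => Sum.inr (Sum.inl (i, j))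
    | Sum.inr (Sum.inr (Sum.inr (Sum.inl ⟨q, _⟩))) => Sum.inr (Sum.inr (Sum.inl q))
    | Sum.inr (Sum.inr (Sum.inr (Sum.inr (Sum.inl i)))) =>
        Sum.inr (Sum.inl (i, ⟨δ - 2, by omega⟩))
    | Sum.inr (Sum.inr (Sum.inr (Sum.inr (Sum.inr i)))) =>
        Sum.inr (Sum.inr (Sum.inr (Sum.inr (Sum.inl i))))
  parent_root := rfl
  rk := fun v => match v with
    | Sum.inl _ => 0
    | Sum.inr (Sum.inl (_, j)) => j.val + 1
    | Sum.inr (Sum.inr (Sum.inl (_, j))) => j.val + 2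
    | Sum.inr (Sum.inr (Sum.inr (Sum.inl ⟨q, _⟩))) => q.2.val + 3
    | Sum.inr (Sum.inr (Sum.inr (Sum.inr (Sum.inl _)))) => δ
    | Sum.inr (Sum.inr (Sum.inr (Sum.inr (Sum.inr _)))) => δ + 1
  rk_lt := by
    rintro (u | ⟨i, j⟩ | ⟨i, j⟩ | ⟨q, k⟩ | i | i) h
    · cases u; exact absurd rfl h
    · by_cases h0 : j.val = 0 <;> simp [h0] <;> omega
    · simp
    · simp
    · simp; omega
    · simp
  rk_root := by
    rintro (u | ⟨i, j⟩ | ⟨i, j⟩ | ⟨q, k⟩ | i | i) h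
    · cases u; rfl
    · simp at h
    · simp at h
    · simp at h
    · simp at h; omega
    · simp at h

/-- The node `cp^i_{j+1}` of `T(n, δ)`. -/
def cpNode (n δ : ℕ) (hδ : 2 ≤ δ) (i : Fin n) (j : Fin (δ-1)) : (theTree n δ hδ).V :=
  Sum.inr (Sum.inl (i, j))

/-!
Every task occupies memory at the step it is executed, so a schedule of makespan `M` and
peak memory `P` processes at most `M * P` tasks. The leaves below the nodes `d^i_j` alone
give `T(δ, δ)` at least `δ³ / 2` nodes, whereas makespan `≤ α (δ + 2)` and peak memory
`≤ β · 2δ` allow only `O(α β δ²)` of them; this fails once `δ > 8 α β`.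
-/

open Finset

namespace InTree

lemma lt_makespan (T : InTree) (t : T.V → ℕ) (v : T.V) : t v < T.makespan t :=
  Nat.lt_of_succ_le (le_sup (f := fun i => t i + 1) (mem_univ v))

lemma card_filter_eq_le_memAt (T : InTree) {t : T.V → ℕ}
    (hprec : ∀ i : T.V, i ≠ T.root → t i + 1 ≤ t (T.parent i)) (s : ℕ) :
    #{v | t v = s} ≤ T.memAt t s := by
  refine card_le_card fun v hv => ?_
  simp only [mem_filter, mem_univ, true_and] at hv ⊢
  refine ⟨hv.le, ?_⟩
  by_cases hroot : v = T.root
  · exact Or.inl hroot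
  · exact Or.inr (by have := hprec v hroot; omega)

lemma card_le_makespan_mul_peakMemory (T : InTree) {t : T.V → ℕ}
    (hprec : ∀ i : T.V, i ≠ T.root → t i + 1 ≤ t (T.parent i)) :
    Fintype.card T.V ≤ T.makespan t * T.peakMemory t := by
  rw [mul_comm, ← card_range (T.makespan t), ← card_univ]
  refine card_le_mul_card_image_of_maps_to (fun v _ => mem_range.2 (T.lt_makespan t v)) _
    fun s hs => ?_
  exact (T.card_filter_eq_le_memAt hprec s).trans (le_sup (f := T.memAt t) hs)

end InTree

lemma mul_self_le_two_mul_sum_range_sub (k : ℕ) :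
    (k + 2) * (k + 2) ≤ 2 * ∑ j ∈ range (k + 1), (k + 2 - j) := by
  induction k with
  | zero => simp
  | succ k ih =>
    rw [sum_range_succ']
    have hshift : ∑ j ∈ range (k + 1), (k + 1 + 2 - (j + 1)) =
        ∑ j ∈ range (k + 1), (k + 2 - j) :=
      sum_congr rfl fun j _ => by omega
    rw [hshift, Nat.sub_zero]
    nlinarith

lemma mul_self_mul_le_two_mul_card_theTree (n δ : ℕ) (hδ : 2 ≤ δ) :
    δ * δ * n ≤ 2 * Fintype.card (theTree n δ hδ).V := by
  obtain ⟨k, rfl⟩ : ∃ k, δ = k + 2 := ⟨δ - 2, by omega⟩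
  let leaves := Σ q : Fin n × Fin (k + 2 - 1), Fin (k + 2 - q.2.val)
  have hleaves : Fintype.card leaves = n * ∑ j ∈ range (k + 1), (k + 2 - j) := by
    simp only [leaves, Fintype.card_sigma, Fintype.card_fin, Fintype.sum_prod_type,
      sum_const, card_univ, smul_eq_mul]
    exact congrArg (n * ·) (Fin.sum_univ_eq_sum_range (fun j => k + 2 - j) (k + 1))
  have hembed : Fintype.card leaves ≤ Fintype.card (TV n (k + 2)) :=
    Fintype.card_le_of_injective (fun x => Sum.inr (Sum.inr (Sum.inr (Sum.inl x))))
      fun _ _ h => by simpa using h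
  have := mul_self_le_two_mul_sum_range_sub k
  change _ ≤ 2 * Fintype.card (TV n (k + 2))
  nlinarith

theorem stmt0_general (α β : ℝ) :
    ∃ (n δ : ℕ), 1 ≤ n ∧ ∃ hδ : 2 ≤ δ,
      ∀ t : (theTree n δ hδ).V → ℕ,
        (theTree n δ hδ).IsSchedule (Fintype.card (theTree n δ hδ).V) t →
        ¬ (((theTree n δ hδ).makespan t : ℝ) ≤ α * ((δ : ℝ) + 2) ∧
           ((theTree n δ hδ).peakMemory t : ℝ) ≤ β * ((n : ℝ) + (δ : ℝ))) := by
  obtain ⟨δ, hδ, hlarge⟩ : ∃ δ : ℕ, 2 ≤ δ ∧ 8 * α * β < δ :=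
    ⟨⌈8 * α * β⌉₊ + 2, by omega, by push_cast; linarith [Nat.le_ceil (8 * α * β)]⟩
  refine ⟨δ, δ, by omega, hδ, fun t ht ⟨hM, hP⟩ => ?_⟩
  have hsize : (δ : ℝ) * δ * δ ≤ 2 * Fintype.card (theTree δ δ hδ).V := by
    exact_mod_cast mul_self_mul_le_two_mul_card_theTree δ δ hδ
  have hwork : (Fintype.card (theTree δ δ hδ).V : ℝ) ≤
      (theTree δ δ hδ).makespan t * (theTree δ δ hδ).peakMemory t := by
    exact_mod_cast (theTree δ δ hδ).card_le_makespan_mul_peakMemory ht.2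
  have hδR : (2 : ℝ) ≤ δ := by exact_mod_cast hδ
  have hM0 : (0 : ℝ) ≤ (theTree δ δ hδ).makespan t := Nat.cast_nonneg _
  have hP0 : (0 : ℝ) ≤ (theTree δ δ hδ).peakMemory t := Nat.cast_nonneg _
  have hα : 0 ≤ α := nonneg_of_mul_nonneg_left (hM0.trans hM) (by linarith)
  have hβ : 0 ≤ β := nonneg_of_mul_nonneg_left (hP0.trans hP) (by linarith)
  have hbudget : ((theTree δ δ hδ).makespan t : ℝ) * (theTree δ δ hδ).peakMemory t ≤
      α * (δ + 2) * (β * (δ + δ)) :=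
    mul_le_mul hM hP hP0 (by positivity)
  nlinarith [mul_nonneg hα hβ]

/-- No algorithm can be simultaneously an `α`-approximation for makespan and a
`β`-approximation for peak memory: for all `α, β ≥ 1` there are `n ≥ 1`,
`δ ≥ 2` such that no schedule of `T(n, δ)` on `|V|` processors (unbounded
parallelism) has both makespan `≤ α(δ+2)` (with `δ+2` the optimal makespan)
and peak memory `≤ β(n+δ)` (with `n+δ` the optimal sequential peak memory). -/
theorem stmt0 (α β : ℝ) (hα : 1 ≤ α) (hβ : 1 ≤ β) :
    ∃ (n δ : ℕ), 1 ≤ n ∧ ∃ hδ : 2 ≤ δ,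
      ∀ t : (theTree n δ hδ).V → ℕ,
        (theTree n δ hδ).IsSchedule (Fintype.card (theTree n δ hδ).V) t →
        ¬ (((theTree n δ hδ).makespan t : ℝ) ≤ α * ((δ : ℝ) + 2) ∧
           ((theTree n δ hδ).peakMemory t : ℝ) ≤ β * ((n : ℝ) + (δ : ℝ))) :=
  stmt0_general α β
end

section
/- Let m ≥ 1 and B be positive integers and a_1, …, a_{3m} be positive integers with B/4 < a_i < B/2 for all i and Σ_{i=1}^{3m} a_i = mB. If there exists a partition of {1, …, 3m} into m pairwise disjoint triples S_1, …, S_m such that Σ_{i ∈ S_k} a_i = B for every k, then there exists a schedule of the reduction tree T(a, B) on p = 3mB processors whose makespan is at most 2m+1 and whose peak memory is at most 3mB + 3m. -/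
/-- Node set of the 3-Partition reduction tree: a root, the nodes `N i`
(`i < 3m`), and for each `i` the `3m * a i` leaf children of `N i`. -/
abbrev RedV (m : ℕ) (a : Fin (3*m) → ℕ) : Type :=
  Unit ⊕ Fin (3*m) ⊕ (Σ i : Fin (3*m), Fin (3*m * a i))

/-- The reduction tree `T(a, B)`: a root whose children are the `N i`,
each `N i` having exactly `3m * a i` leaf children. -/
def redTree (m : ℕ) (a : Fin (3*m) → ℕ) : InTree where
  V := RedV m a
  root := Sum.inl ()
  parent := fun v => match v with
    | Sum.inl _ => Sum.inl ()
    | Sum.inr (Sum.inl _) => Sum.inl ()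
    | Sum.inr (Sum.inr ⟨i, _⟩) => Sum.inr (Sum.inl i)
  parent_root := rfl
  rk := fun v => match v with
    | Sum.inl _ => 0
    | Sum.inr (Sum.inl _) => 1
    | Sum.inr (Sum.inr _) => 2
  rk_lt := by rintro (u | i | ⟨i, j⟩) h
              · cases u; exact absurd rfl h
              · simp
              · simp
  rk_root := by rintro (u | i | s) h
                · cases u; rfl
                · simp at h
                · simp at h

/-- The node `N i` of the reduction tree. -/
def Nnode (m : ℕ) (a : Fin (3*m) → ℕ) (i : Fin (3*m)) : (redTree m a).V :=
  Sum.inr (Sum.inl i)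

/-! Schedule the leaves of the `c`-th triple of the partition at step `2c`, its three nodes `N i`
at step `2c + 1`, and the root at step `2m`. At an even step the processors and the memory hold
the `3m * (a i + a j + a l) = 3mB` leaves of one triple, and besides them the memory holds at
most the `3m` nodes `N i`. -/

open Finset

theorem Finset.card_filter_sigma_eq_sum {ι : Type*} [Fintype ι] (β : ι → Type*)
    [∀ i, Fintype (β i)] (q : ι → Prop) [DecidablePred q] :
    #{x : Σ i, β i | q x.1} = ∑ i with q i, Fintype.card (β i) := by
  rw [card_filter, ← univ_sigma_univ, sum_sigma, sum_filter]
  refine sum_congr rfl fun i _ => ?_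
  by_cases h : q i <;> simp [h, card_univ]

namespace redTree

variable {m : ℕ} {a : Fin (3*m) → ℕ}

theorem card_filter_eq (P : (redTree m a).V → Prop) [DecidablePred P]
    (r : Prop) [Decidable r] (hr : P (redTree m a).root ↔ r)
    (n : Fin (3*m) → Prop) [DecidablePred n] (hn : ∀ i, P (Nnode m a i) ↔ n i)
    (q : Fin (3*m) → Prop) [DecidablePred q] (hq : ∀ i j, P (Sum.inr (Sum.inr ⟨i, j⟩)) ↔ q i) :
    #{v | P v} = (if r then 1 else 0) + #{i | n i} + ∑ i with q i, 3*m*a i := by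
  rw [card_filter]
  -- `(redTree m a).V` is `RedV m a` only up to unfolding `redTree`
  erw [Fintype.sum_sum_type, Fintype.sum_sum_type]
  rw [← card_filter, ← card_filter, ← card_filter, ← add_assoc]
  congr 2
  · rw [card_filter, Fintype.sum_unique]
    congr 1
    exact propext hr
  · congr 1
    ext i
    simp only [mem_filter, mem_univ, true_and]
    exact hn i
  · convert card_filter_sigma_eq_sum (fun i => Fin (3*m*a i)) q using 2
    · ext ⟨i, j⟩
      simp only [mem_filter, mem_univ, true_and, hq]
    · exact (Fintype.card_fin _).symm

variable (a) (k : Fin (3*m) → Fin m)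

def batchSchedule : (redTree m a).V → ℕ :=
  Sum.elim (fun _ => 2*m) (Sum.elim (fun i => 2*k i + 1) (fun x => 2*k x.1))

theorem makespan_batchSchedule_le : (redTree m a).makespan (batchSchedule a k) ≤ 2*m + 1 := by
  refine Finset.sup_le ?_
  rintro (_ | i | ⟨i, _⟩) _
  · exact le_rfl
  all_goals
    have := (k i).isLt
    simp only [batchSchedule, Sum.elim_inr, Sum.elim_inl]
    omega

theorem batchSchedule_precedes (v : (redTree m a).V) (hv : v ≠ (redTree m a).root) :
    batchSchedule a k v + 1 ≤ batchSchedule a k ((redTree m a).parent v) := by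
  rcases v with _ | i | ⟨i, _⟩
  · exact absurd rfl hv
  · show 2*(k i : ℕ) + 1 + 1 ≤ 2*m
    have := (k i).isLt
    omega
  · exact le_rfl

theorem sum_filter_le_of_batch {B : ℕ} (hload : ∀ c, ∑ i with k i = c, a i ≤ B)
    (q : Fin (3*m) → Prop) [DecidablePred q] (c : ℕ) (hq : ∀ i, q i → (k i : ℕ) = c) :
    ∑ i with q i, 3*m*a i ≤ 3*m*B := by
  rw [← mul_sum]
  refine Nat.mul_le_mul_left _ ?_
  by_cases hc : c < m
  · refine (sum_le_sum_of_subset fun i hi => ?_).trans (hload ⟨c, hc⟩)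
    simp only [mem_filter, mem_univ, true_and] at hi ⊢
    exact Fin.ext (hq i hi)
  · rw [filter_false_of_mem fun i _ hi => hc (hq i hi ▸ (k i).isLt), sum_empty]
    exact Nat.zero_le _

variable {B : ℕ} (hm : 1 ≤ m) (hB : 1 ≤ B) (hload : ∀ c, ∑ i with k i = c, a i ≤ B)
include hm hB hload

theorem card_batchSchedule_eq_le (s : ℕ) : #{v | batchSchedule a k v = s} ≤ 3*m*B := by
  rw [card_filter_eq _ (2*m = s) Iff.rfl (fun i => 2*(k i : ℕ) + 1 = s) (fun _ => Iff.rfl)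
    (fun i => 2*(k i : ℕ) = s) fun _ _ => Iff.rfl]
  have hleaves := sum_filter_le_of_batch a k hload (fun i => 2*(k i : ℕ) = s) (s/2) (by omega)
  have hnodes : #{i | 2*(k i : ℕ) + 1 = s} ≤ 3*m := (card_filter_le _ _).trans_eq (card_fin _)
  rcases Nat.even_or_odd' s with ⟨c, rfl | rfl⟩
  · have hnodes_idle : #{i | 2*(k i : ℕ) + 1 = 2*c} = 0 :=
      card_filter_eq_zero_iff.2 fun i _ => by omega
    rw [hnodes_idle]
    by_cases hc : m = c
    · have hleaves_done : ∑ i with 2*(k i : ℕ) = 2*c, 3*m*a i = 0 :=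
        sum_eq_zero fun i hi => absurd (mem_filter.1 hi).2 (by have := (k i).isLt; omega)
      rw [hleaves_done, if_pos (by omega)]
      nlinarith
    · rw [if_neg (by omega)]
      omega
  · have hleaves_idle : ∑ i with 2*(k i : ℕ) = 2*c + 1, 3*m*a i = 0 :=
      sum_eq_zero fun i hi => absurd (mem_filter.1 hi).2 (by omega)
    rw [hleaves_idle, if_neg (by omega)]
    nlinarith

theorem isSchedule_batchSchedule : (redTree m a).IsSchedule (3*m*B) (batchSchedule a k) :=
  ⟨card_batchSchedule_eq_le a k hm hB hload, batchSchedule_precedes a k⟩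

theorem memAt_batchSchedule_le (s : ℕ) :
    (redTree m a).memAt (batchSchedule a k) s ≤ 3*m*B + 3*m := by
  rw [InTree.memAt, card_filter_eq _ (2*m ≤ s) (by simp [batchSchedule, redTree])
    (fun i => 2*(k i : ℕ) + 1 ≤ s ∧ s ≤ 2*m) (fun _ => by simp [batchSchedule, redTree, Nnode])
    (fun i => 2*(k i : ℕ) ≤ s ∧ s ≤ 2*(k i : ℕ) + 1) fun _ _ => by simp [batchSchedule, redTree]]
  have hleaves := sum_filter_le_of_batch a k hload
    (fun i => 2*(k i : ℕ) ≤ s ∧ s ≤ 2*(k i : ℕ) + 1) (s/2) (by omega)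
  have hnodes : #{i | 2*(k i : ℕ) + 1 ≤ s ∧ s ≤ 2*m} ≤ 3*m :=
    (card_filter_le _ _).trans_eq (card_fin _)
  by_cases hs : 2*m ≤ s
  · have hleaves_done : ∑ i with 2*(k i : ℕ) ≤ s ∧ s ≤ 2*(k i : ℕ) + 1, 3*m*a i = 0 :=
      sum_eq_zero fun i hi => absurd (mem_filter.1 hi).2 (by have := (k i).isLt; omega)
    rw [hleaves_done, if_pos hs]
    nlinarith
  · rw [if_neg hs]
    omega

theorem peakMemory_batchSchedule_le :
    (redTree m a).peakMemory (batchSchedule a k) ≤ 3*m*B + 3*m :=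
  Finset.sup_le fun s _ => memAt_batchSchedule_le a k hm hB hload s

end redTree

theorem stmt1_general (m B : ℕ) (hm : 1 ≤ m) (hB : 1 ≤ B) (a : Fin (3*m) → ℕ)
    (hpart : ∃ S : Fin m → Finset (Fin (3*m)),
      (∀ k, (S k).card = 3) ∧ (∀ i, ∃! k, i ∈ S k) ∧ (∀ k, ∑ i ∈ S k, a i = B)) :
    ∃ t : (redTree m a).V → ℕ, (redTree m a).IsSchedule (3*m*B) t ∧
      (redTree m a).makespan t ≤ 2*m + 1 ∧
      (redTree m a).peakMemory t ≤ 3*m*B + 3*m := by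
  obtain ⟨S, -, hunique, hsumS⟩ := hpart
  choose k hk huniq using hunique
  have hbatch : ∀ c, ({i | k i = c} : Finset _) = S c := fun c => by
    ext i
    simp only [mem_filter, mem_univ, true_and]
    exact ⟨fun h => h ▸ hk i, fun h => (huniq i c h).symm⟩
  have hload : ∀ c, ∑ i with k i = c, a i ≤ B := fun c => by rw [hbatch, hsumS]
  exact ⟨redTree.batchSchedule a k, redTree.isSchedule_batchSchedule a k hm hB hload,
    redTree.makespan_batchSchedule_le a k, redTree.peakMemory_batchSchedule_le a k hm hB hload⟩

/-- If the 3-Partition instance has a solution, then the reduction tree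
`T(a, B)` admits a schedule on `3mB` processors with makespan at most `2m+1`
and peak memory at most `3mB + 3m`. -/
theorem stmt1 (m B : ℕ) (hm : 1 ≤ m) (hB : 1 ≤ B) (a : Fin (3*m) → ℕ)
    (ha : ∀ i, B < 4 * a i ∧ 2 * a i < B) (hsum : ∑ i, a i = m * B)
    (hpart : ∃ S : Fin m → Finset (Fin (3*m)),
      (∀ k, (S k).card = 3) ∧ (∀ i, ∃! k, i ∈ S k) ∧ (∀ k, ∑ i ∈ S k, a i = B)) :
    ∃ t : (redTree m a).V → ℕ, (redTree m a).IsSchedule (3*m*B) t ∧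
      (redTree m a).makespan t ≤ 2*m + 1 ∧
      (redTree m a).peakMemory t ≤ 3*m*B + 3*m :=
  stmt1_general m B hm hB a hpart
end

section
/- Let p ≥ 1 and q ≥ 1 be integers and let w_1 ≥ w_2 ≥ … ≥ w_q ≥ 0 be real numbers. For every subset S ⊆ {1, …, q} with |S| ≤ p and S nonempty, (max_{i ∈ S} w_i) + Σ_{i ∉ S} w_i ≥ w_1 + Σ_{i = min(p,q)+1}^{q} w_i. In other words, the quantity (max_{i ∈ S} w_i) + Σ_{i ∉ S} w_i is minimized over all subsets of size at most p by taking S to consist of the min(p, q) largest weights. -/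
open Finset

/-- For an antitone `v`, the sum over a finset of naturals all `≥ c` is at most
the sum of `v` over the first `card` values starting at `c`. -/
lemma aux_sum_le (v : ℕ → ℝ) (hv : Antitone v) (c : ℕ) (T : Finset ℕ)
    (hT : ∀ i ∈ T, c ≤ i) :
    ∑ i ∈ T, v i ≤ ∑ j ∈ Finset.range T.card, v (c + j) := by
  set k := T.card with hk
  have f := T.orderEmbOfFin hk.symm
  have himg : Finset.univ.image (fun j => T.orderEmbOfFin hk.symm j) = T := by
    ext x
    simp only [Finset.mem_image, Finset.mem_univ, true_and]
    constructor
    · rintro ⟨j, rfl⟩; exact T.orderEmbOfFin_mem hk.symm j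
    · intro hx
      have := T.range_orderEmbOfFin hk.symm
      have : x ∈ Set.range (T.orderEmbOfFin hk.symm) := by rw [this]; exact hx
      obtain ⟨j, hj⟩ := this
      exact ⟨j, hj⟩
  have hle : ∀ n (h : n < k), c + n ≤ T.orderEmbOfFin hk.symm ⟨n, h⟩ := by
    intro n
    induction n with
    | zero => intro h; simpa using hT _ (T.orderEmbOfFin_mem hk.symm ⟨0, h⟩)
    | succ n ih =>
      intro h
      have h' : n < k := Nat.lt_of_succ_lt h
      have := (T.orderEmbOfFin hk.symm).strictMono
        (show (⟨n, h'⟩ : Fin k) < ⟨n + 1, h⟩ by simp)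
      have := ih h'
      omega
  have hsum : ∑ i ∈ T, v i = ∑ j : Fin k, v (T.orderEmbOfFin hk.symm j) := by
    have h := Finset.sum_image (g := fun j : Fin k => (T.orderEmbOfFin hk.symm j : ℕ)) (s := (Finset.univ : Finset (Fin k))) (f := v)
      (fun a _ b _ h => (T.orderEmbOfFin hk.symm).injective h)
    rw [himg] at h
    exact h
  calc ∑ i ∈ T, v i = ∑ j : Fin k, v (T.orderEmbOfFin hk.symm j) := hsum
    _ ≤ ∑ j : Fin k, v (c + j.val) := by
        apply Finset.sum_le_sum
        intro j _
        exact hv (hle j.val j.isLt)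
    _ = ∑ j ∈ Finset.range k, v (c + j) := Fin.sum_univ_eq_sum_range (fun j => v (c + j)) k

/-- Given weights `w 0 ≥ w 1 ≥ … ≥ w (q-1) ≥ 0` (1-indexed `w_1 ≥ … ≥ w_q` in
the paper), for every nonempty set `S` of at most `p` indices, the quantity
`max_{i ∈ S} w i + Σ_{i ∉ S} w i` is at least
`w_1 + Σ_{i = min(p,q)+1}^{q} w_i`, i.e., it is minimized by taking the
`min(p, q)` largest weights. -/
theorem stmt4 (p q : ℕ) (hp : 1 ≤ p) (hq : 1 ≤ q) (w : Fin q → ℝ)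
    (hsorted : Antitone w) (hnonneg : ∀ i, 0 ≤ w i)
    (S : Finset (Fin q)) (hS : S.Nonempty) (hcard : S.card ≤ p) :
    w ⟨0, hq⟩ + ∑ i ∈ Finset.univ.filter (fun i : Fin q => min p q ≤ i.val), w i
      ≤ S.sup' hS w + ∑ i ∈ Sᶜ, w i := by
  set m := min p q with hm
  have hmq : m ≤ q := min_le_right p q
  have hm1 : 1 ≤ m := le_min hp hq
  set a := S.min' hS with ha
  have haS : a ∈ S := S.min'_mem hS
  have hsup : w a ≤ S.sup' hS w := Finset.le_sup' w haS
  -- extend w to ℕ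
  set v : ℕ → ℝ := fun n => if h : n < q then w ⟨n, h⟩ else 0 with hv
  have hv0 : ∀ n, 0 ≤ v n := by
    intro n; by_cases h : n < q <;> simp [hv, h, hnonneg]
  have hvA : Antitone v := by
    intro x y hxy
    by_cases hy : y < q
    · have hx : x < q := lt_of_le_of_lt hxy hy
      simp only [hv, dif_pos hx, dif_pos hy]
      exact hsorted (show (⟨x, hx⟩ : Fin q) ≤ ⟨y, hy⟩ from hxy)
    · simp only [hv, dif_neg hy]
      exact hv0 x
  -- complement identities
  have hcomp : ∑ i ∈ Sᶜ, w i = ∑ i : Fin q, w i - ∑ i ∈ S, w i := by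
    have := Finset.sum_add_sum_compl S w
    linarith
  have hfilt : ∑ i ∈ Finset.univ.filter (fun i : Fin q => m ≤ i.val), w i
      = ∑ i : Fin q, w i - ∑ i ∈ Finset.univ.filter (fun i : Fin q => i.val < m), w i := by
    have h1 : ∑ i ∈ Finset.univ.filter (fun i : Fin q => i.val < m), w i
        + ∑ i ∈ Finset.univ.filter (fun i : Fin q => ¬ i.val < m), w i
        = ∑ i : Fin q, w i := Finset.sum_filter_add_sum_filter_not _ _ _
    have h2 : Finset.univ.filter (fun i : Fin q => ¬ i.val < m)
        = Finset.univ.filter (fun i : Fin q => m ≤ i.val) := by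
      apply Finset.filter_congr; intro i _; simp [not_lt]
    rw [h2] at h1; linarith
  have hSsum : ∑ i ∈ S, w i = w a + ∑ i ∈ S.erase a, w i :=
    (Finset.add_sum_erase S w haS).symm
  -- the initial-segment sum equals a range sum of v
  have hinit : ∑ i ∈ Finset.univ.filter (fun i : Fin q => i.val < m), w i
      = ∑ n ∈ Finset.range m, v n := by
    rw [Finset.sum_bij (fun (i : Fin q) (_ : i ∈ Finset.univ.filter
        (fun i : Fin q => i.val < m)) => i.val)]
    · intro i hi
      simp only [Finset.mem_filter] at hi
      simp [Finset.mem_range, hi.2]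
    · intro i _ j _ h; exact Fin.val_injective h
    · intro n hn
      simp only [Finset.mem_range] at hn
      exact ⟨⟨n, lt_of_lt_of_le hn hmq⟩, by simp [hn], rfl⟩
    · intro i hi
      simp [hv, i.isLt]
  have hsplit : ∑ n ∈ Finset.range m, v n = v 0 + ∑ n ∈ Finset.range (m - 1), v (n + 1) := by
    obtain ⟨m', hm'⟩ : ∃ m', m = m' + 1 := ⟨m - 1, by omega⟩
    rw [hm', Finset.sum_range_succ']
    simp [add_comm]
  have hv0eq : v 0 = w ⟨0, hq⟩ := by
    have h0 : (0 : ℕ) < q := hq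
    simp [hv, h0]
  -- erase-set sum bound
  have hTsum : ∑ i ∈ S.erase a, w i ≤ ∑ n ∈ Finset.range (m - 1), v (n + 1) := by
    set T := (S.erase a).image Fin.val with hT
    have hTeq : ∑ i ∈ S.erase a, w i = ∑ n ∈ T, v n := by
      rw [hT, Finset.sum_image (fun i _ j _ h => Fin.val_injective h)]
      apply Finset.sum_congr rfl
      intro i _; simp [hv, i.isLt]
    have hT1 : ∀ n ∈ T, 1 ≤ n := by
      intro n hn
      simp only [hT, Finset.mem_image] at hn
      obtain ⟨i, hi, rfl⟩ := hn
      have hine : i ≠ a := Finset.ne_of_mem_erase hi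
      have hiS : i ∈ S := Finset.mem_of_mem_erase hi
      have := S.min'_le i hiS
      have : a.val ≤ i.val := this
      have : a.val ≠ i.val := fun h => hine (Fin.val_injective h.symm)
      omega
    have hTcard : T.card ≤ m - 1 := by
      have h1 : T.card = (S.erase a).card := Finset.card_image_of_injective _ Fin.val_injective
      have h2 : (S.erase a).card = S.card - 1 := Finset.card_erase_of_mem haS
      have h3 : S.card ≤ q := by
        have := Finset.card_le_univ S
        simpa using this
      omega
    calc ∑ i ∈ S.erase a, w i = ∑ n ∈ T, v n := hTeq
      _ ≤ ∑ j ∈ Finset.range T.card, v (1 + j) := aux_sum_le v hvA 1 T hT1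
      _ ≤ ∑ j ∈ Finset.range (m - 1), v (1 + j) := by
          apply Finset.sum_le_sum_of_subset_of_nonneg
          · exact Finset.range_subset_range.mpr hTcard
          · intro n _ _; exact hv0 _
      _ = ∑ n ∈ Finset.range (m - 1), v (n + 1) := by
          apply Finset.sum_congr rfl; intro n _; rw [add_comm]
  rw [hcomp, hfilt, hSsum, hinit, hsplit, hv0eq]
  linarith
end

section
/- For all integers n ≥ 1 and δ ≥ 2, there exists a sequential schedule of the tree T(n, δ) whose peak memory is at most n + δ. (Combined with the matching lower bound, the optimal sequential peak memory of T(n, δ) is exactly n + δ.) -/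
/-!
Schedule the branches of `T(n, δ)` one after the other and the root last. Inside branch `i`,
for `j = 1, …, δ-1` the leaves of `d^i_j` and then `d^i_j` are processed, then `b^i_{δ+1}`,
`b^i_δ`, and finally the chain `cp^i_{δ-1}, …, cp^i_1` bottom-up.

For a sequential schedule the memory at step `s` is at most one (the task running at `s`, or
the finished root) plus the number of non-root nodes `v` with `t v < s ≤ t (parent v)`. So it
suffices to give every non-root node one of `n + δ - 1` slots such that nodes sharing a slot
have disjoint lifetimes. The slot of a node is its height in the stack of outputs while it
waits for its parent: below it lie the outputs of the finished branches, those `d^i_{j'}` of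
its own branch not yet consumed, and its earlier siblings.
-/

open Finset Function

namespace InTree

variable (T : InTree)

theorem le_root_of_lt_parent {β : Type*} [Preorder β] {f : T.V → β}
    (hf : ∀ v, v ≠ T.root → f v < f (T.parent v)) (v : T.V) : f v ≤ f T.root := by
  induction hk : T.rk v using Nat.strong_induction_on generalizing v with
  | _ k ih =>
    by_cases hv : v = T.root
    · rw [hv]
    · exact (hf v hv).le.trans (ih _ (hk ▸ T.rk_lt v hv) _ rfl)

theorem isSchedule_one_of_injective {t : T.V → ℕ} (ht : Injective t)
    (hpar : ∀ v, v ≠ T.root → t v < t (T.parent v)) : T.IsSchedule 1 t :=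
  ⟨fun _ => card_le_one.2 fun _ ha _ hb =>
    ht ((mem_filter.1 ha).2.trans (mem_filter.1 hb).2.symm), hpar⟩

theorem memAt_le_of_slot {t : T.V → ℕ} (ht : Injective t)
    (hpar : ∀ v, v ≠ T.root → t v < t (T.parent v)) (c : T.V → ℕ) {m : ℕ}
    (hcm : ∀ v, v ≠ T.root → c v < m)
    (hc : ∀ v w, c v = c w → t v < t w → t (T.parent v) ≤ t w) (s : ℕ) :
    T.memAt t s ≤ m + 1 := by
  have hroot := T.le_root_of_lt_parent hpar
  set live := univ.filter fun v : T.V => t v ≤ s ∧ (v = T.root ∨ s ≤ t (T.parent v))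
  have mem_live {v} : v ∈ live ↔ t v ≤ s ∧ (v = T.root ∨ s ≤ t (T.parent v)) := by
    simp [live]
  let crossing := fun v : T.V => v ≠ T.root ∧ t v < s
  have hcrossing : #(live.filter crossing) ≤ m := by
    have hlife {v} (hv : v ∈ live.filter crossing) : t v < s ∧ s ≤ t (T.parent v) := by
      obtain ⟨hvl, hvr, hvs⟩ := mem_filter.1 hv
      obtain ⟨-, hv | hv⟩ := mem_live.1 hvl
      exacts [absurd hv hvr, ⟨hvs, hv⟩]
    calc #(live.filter crossing) ≤ #(range m) := by
          refine card_le_card_of_injOn c (fun v hv => mem_range.2 (hcm v (mem_filter.1 hv).2.1)) ?_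
          intro v hv w hw hvw
          rcases lt_trichotomy (t v) (t w) with h | h | h
          · exact absurd ((hc v w hvw h).trans_lt (hlife hw).1) (hlife hv).2.not_gt
          · exact ht h
          · exact absurd ((hc w v hvw.symm h).trans_lt (hlife hv).1) (hlife hw).2.not_gt
      _ = m := card_range m
  have hrest : #(live.filter fun v => ¬ crossing v) ≤ 1 := by
    have root_or_now {v} (hv : v ∈ live.filter fun v => ¬ crossing v) :
        t v ≤ s ∧ (v = T.root ∨ t v = s) := by
      obtain ⟨hvl, hvc⟩ := mem_filter.1 hv
      have hvs := (mem_live.1 hvl).1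
      by_cases hvr : v = T.root
      · exact ⟨hvs, .inl hvr⟩
      · exact ⟨hvs, .inr (le_antisymm hvs (not_lt.1 fun h => hvc ⟨hvr, h⟩))⟩
    have not_root_at {v} (hv : v ≠ T.root) (hvs : t v = s) (hr : t T.root ≤ s) : False :=
      ((hpar v hv).trans_le (hroot _)).not_ge (hvs ▸ hr)
    refine card_le_one.2 fun v hv w hw => ?_
    obtain ⟨hvs, hvr | hvt⟩ := root_or_now hv <;> obtain ⟨hws, hwr | hwt⟩ := root_or_now hw
    · exact hvr.trans hwr.symm
    · by_contra hne
      exact not_root_at (fun h => hne (hvr.trans h.symm)) hwt (hvr ▸ hvs)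
    · by_contra hne
      exact not_root_at (fun h => hne (h.trans hwr.symm)) hvt (hwr ▸ hws)
    · exact ht (hvt.trans hwt.symm)
  change #live ≤ m + 1
  rw [← card_filter_add_card_filter_not (s := live) crossing]
  omega

end InTree

section Rank

variable {α β : Type*} [Fintype α] [LinearOrder β] {f : α → β} {a b : α}

def rankBy (f : α → β) (a : α) : ℕ := #{x | f x < f a}

theorem rankBy_lt_rankBy (h : f a < f b) : rankBy f a < rankBy f b := by
  refine card_lt_card ((ssubset_iff_of_subset fun x hx => ?_).2 ⟨a, ?_, ?_⟩)
  · simp only [mem_filter, mem_univ, true_and] at hx ⊢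
    exact hx.trans h
  · simpa using h
  · simp

theorem rankBy_lt_rankBy_iff (hf : Injective f) : rankBy f a < rankBy f b ↔ f a < f b := by
  refine ⟨fun h => ?_, rankBy_lt_rankBy⟩
  rcases lt_trichotomy (f a) (f b) with hab | hab | hab
  · exact hab
  · exact absurd (hf hab ▸ h) (lt_irrefl _)
  · exact absurd (rankBy_lt_rankBy hab) h.not_gt

theorem rankBy_le_rankBy_iff (hf : Injective f) : rankBy f a ≤ rankBy f b ↔ f a ≤ f b := by
  simpa only [not_lt] using (rankBy_lt_rankBy_iff (a := b) (b := a) hf).not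

theorem rankBy_injective (hf : Injective f) : Injective (rankBy f) := fun _ _ h =>
  hf (le_antisymm ((rankBy_le_rankBy_iff hf).1 h.le) ((rankBy_le_rankBy_iff hf).1 h.ge))

end Rank

def lexKey (a b c : ℕ) : ℕ ×ₗ ℕ ×ₗ ℕ := toLex (a, toLex (b, c))

@[simp] theorem lexKey_le_lexKey {a b c a' b' c' : ℕ} :
    lexKey a b c ≤ lexKey a' b' c' ↔
      a < a' ∨ a = a' ∧ (b < b' ∨ b = b' ∧ c ≤ c') := by
  simp [lexKey, Prod.Lex.toLex_le_toLex]

@[simp] theorem lexKey_lt_lexKey {a b c a' b' c' : ℕ} :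
    lexKey a b c < lexKey a' b' c' ↔ a < a' ∨ a = a' ∧ (b < b' ∨ b = b' ∧ c < c') := by
  simp [lexKey, Prod.Lex.toLex_lt_toLex]

@[simp] theorem lexKey_inj {a b c a' b' c' : ℕ} :
    lexKey a b c = lexKey a' b' c' ↔ a = a' ∧ b = b' ∧ c = c' := by
  simp [lexKey]

section Schedule

variable (n δ : ℕ)

/-- Nodes of `T(n, δ)` in the order of the schedule: branch, then phase (`j` for the leaves
of `d^i_{j+1}` and `d^i_{j+1}`, `δ - 1` for the `b`'s, `δ` for the chain), then position. -/
def visitKey : TV n δ → ℕ ×ₗ ℕ ×ₗ ℕ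
  | .inl _ => lexKey n 0 0
  | .inr (.inl (i, j)) => lexKey i δ (δ - j)
  | .inr (.inr (.inl (i, j))) => lexKey i j δ
  | .inr (.inr (.inr (.inl ⟨(i, j), k⟩))) => lexKey i j k
  | .inr (.inr (.inr (.inr (.inl i)))) => lexKey i (δ - 1) 1
  | .inr (.inr (.inr (.inr (.inr i)))) => lexKey i (δ - 1) 0

def stackSlot : TV n δ → ℕ
  | .inl _ => 0
  | .inr (.inl (i, j)) => i + j
  | .inr (.inr (.inl (i, j))) => i + j
  | .inr (.inr (.inr (.inl ⟨(i, j), k⟩))) => i + j + k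
  | .inr (.inr (.inr (.inr (.inl i)))) => i + δ - 1
  | .inr (.inr (.inr (.inr (.inr i)))) => i + δ - 1

theorem visitKey_injective : Injective (visitKey n δ) := by
  rintro (_ | ⟨i, j⟩ | ⟨i, j⟩ | ⟨⟨i, j⟩, k⟩ | i | i)
    (_ | ⟨i', j'⟩ | ⟨i', j'⟩ | ⟨⟨i', j'⟩, k'⟩ | i' | i') h <;>
    simp [visitKey] at h ⊢ <;> try omega
  obtain ⟨hi, hj, hk⟩ := h
  obtain rfl := Fin.ext hi
  obtain rfl := Fin.ext hj
  exact ⟨⟨rfl, rfl⟩, heq_of_eq (Fin.ext hk)⟩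

variable {δ} (hδ : 2 ≤ δ)

theorem visitKey_lt_visitKey_parent (v : TV n δ) (hv : v ≠ (theTree n δ hδ).root) :
    visitKey n δ v < visitKey n δ ((theTree n δ hδ).parent v) := by
  rcases v with (_ | ⟨i, ⟨_ | j, hj⟩⟩ | ⟨i, j⟩ | ⟨⟨i, j⟩, k⟩ | i | i) <;>
    simp [visitKey, theTree] at hv ⊢ <;> omega

include hδ in
theorem stackSlot_lt (v : TV n δ) : stackSlot n δ v < n + δ - 1 := by
  rcases v with (_ | ⟨i, j⟩ | ⟨i, j⟩ | ⟨⟨i, j⟩, k⟩ | i | i) <;>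
    simp [stackSlot] <;> omega

theorem visitKey_parent_le_of_stackSlot_eq (v w : TV n δ)
    (hs : stackSlot n δ v = stackSlot n δ w) (hvw : visitKey n δ v < visitKey n δ w) :
    visitKey n δ ((theTree n δ hδ).parent v) ≤ visitKey n δ w := by
  rcases v with (_ | ⟨i, ⟨_ | j, hj⟩⟩ | ⟨i, j⟩ | ⟨⟨i, j⟩, k⟩ | i | i) <;>
    rcases w with (_ | ⟨i', j'⟩ | ⟨i', j'⟩ | ⟨⟨i', j'⟩, k'⟩ | i' | i') <;>
    simp [visitKey, stackSlot, theTree] at hs hvw ⊢ <;> omega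

end Schedule

theorem stmt7_general (n δ : ℕ) (hδ : 2 ≤ δ) :
    ∃ t : (theTree n δ hδ).V → ℕ,
      (theTree n δ hδ).IsSchedule 1 t ∧ (theTree n δ hδ).peakMemory t ≤ n + δ := by
  have hinj := visitKey_injective n δ
  have hpar (v : TV n δ) (hv : v ≠ (theTree n δ hδ).root) :
      rankBy (visitKey n δ) v < rankBy (visitKey n δ) ((theTree n δ hδ).parent v) :=
    (rankBy_lt_rankBy_iff hinj).2 (visitKey_lt_visitKey_parent n hδ v hv)
  refine ⟨rankBy (visitKey n δ), (theTree n δ hδ).isSchedule_one_of_injective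
    (rankBy_injective hinj) hpar, Finset.sup_le fun s _ => ?_⟩
  have hmem := (theTree n δ hδ).memAt_le_of_slot (rankBy_injective hinj) hpar (stackSlot n δ)
    (fun v _ => stackSlot_lt n hδ v)
    (fun v w hs hvw => (rankBy_le_rankBy_iff hinj).2
      (visitKey_parent_le_of_stackSlot_eq n hδ v w hs ((rankBy_lt_rankBy_iff hinj).1 hvw))) s
  omega

/-- There is a sequential schedule (one processor) of `T(n, δ)` whose peak
memory is at most `n + δ`. -/
theorem stmt7 (n δ : ℕ) (hn : 1 ≤ n) (hδ : 2 ≤ δ) :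
    ∃ t : (theTree n δ hδ).V → ℕ,
      (theTree n δ hδ).IsSchedule 1 t ∧ (theTree n δ hδ).peakMemory t ≤ n + δ :=
  stmt7_general n δ hδ
end

section
/- For all integers n ≥ 1, δ ≥ 2 and every real C ≥ δ + 2, every schedule of the tree T(n, δ) on |V| processors whose makespan is at most C has peak memory at least n(δ² + 5δ − 6) / (C − 2). -/
/-!
Let `M` be the makespan and `r` the root, so that `t r = M - 1`. A node whose parent is not `r`
is in memory at the step where it is computed, and a node whose grandparent is not `r` also at
the (later) step where its parent is computed; both steps lie among the first `M - 2`. Summing the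
memory over these steps gives
`2|V| - #{v | parent v = r} - #{v | parent (parent v) = r} ≤ peak · (M - 2)`.
In `T(n, δ)` the two subtracted sets have `n + 1` and `3n + 1` elements, and
`2|V| = n(δ² + 5δ - 2) + 2`.
-/

open Finset

namespace InTree

variable (T : InTree) {t : T.V → ℕ}

theorem le_root (hprec : ∀ i, i ≠ T.root → t i + 1 ≤ t (T.parent i)) (v : T.V) :
    t v ≤ t T.root := by
  induction hk : T.rk v using Nat.strong_induction_on generalizing v with
  | _ k ih =>
    by_cases hv : v = T.root
    · rw [hv]
    · exact (Nat.le_succ _).trans ((hprec v hv).trans (ih _ (hk ▸ T.rk_lt v hv) _ rfl))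

theorem add_one_le_root (hprec : ∀ i, i ≠ T.root → t i + 1 ≤ t (T.parent i)) {v : T.V}
    (hv : v ≠ T.root) : t v + 1 ≤ t T.root :=
  (hprec v hv).trans (T.le_root hprec _)

theorem makespan_eq (hprec : ∀ i, i ≠ T.root → t i + 1 ≤ t (T.parent i)) :
    T.makespan t = t T.root + 1 :=
  le_antisymm (Finset.sup_le fun v _ => Nat.succ_le_succ (T.le_root hprec v))
    (Finset.le_sup (f := fun i => t i + 1) (mem_univ T.root))

theorem sum_memAt_eq (m : ℕ) :
    ∑ s ∈ range m, T.memAt t s =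
      ∑ v, #{s ∈ range m | t v ≤ s ∧ (v = T.root ∨ s ≤ t (T.parent v))} := by
  simp only [memAt, card_filter]
  exact sum_comm

theorem sum_memAt_le_peakMemory_mul {m : ℕ} (hm : m ≤ T.makespan t) :
    ∑ s ∈ range m, T.memAt t s ≤ T.peakMemory t * m := by
  simpa [mul_comm] using sum_le_card_nsmul (range m) (T.memAt t) (T.peakMemory t)
    fun s hs => le_sup (mem_range.2 ((mem_range.1 hs).trans_le hm))

theorem two_le_card_live_steps_add (hprec : ∀ i, i ≠ T.root → t i + 1 ≤ t (T.parent i))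
    (v : T.V) :
    2 ≤ #{s ∈ range (t T.root - 1) | t v ≤ s ∧ (v = T.root ∨ s ≤ t (T.parent v))}
      + (if T.parent v = T.root then 1 else 0)
      + (if T.parent (T.parent v) = T.root then 1 else 0) := by
  by_cases hp : T.parent v = T.root
  · simp [hp, T.parent_root]
  have hv : v ≠ T.root := fun h => hp (h ▸ T.parent_root)
  have hvp := hprec v hv
  have hpr := T.add_one_le_root hprec hp
  by_cases hpp : T.parent (T.parent v) = T.root
  · have hlive : t v ∈
        ({s ∈ range (t T.root - 1) | t v ≤ s ∧ (v = T.root ∨ s ≤ t (T.parent v))}) := by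
      simp only [mem_filter, mem_range]; omega
    simp only [hp, hpp, if_true, if_false]
    have := card_pos.2 ⟨_, hlive⟩
    omega
  · have hpp' := hprec _ hp
    have hppr := T.add_one_le_root hprec hpp
    have hsub : {t v, t (T.parent v)} ⊆
        ({s ∈ range (t T.root - 1) | t v ≤ s ∧ (v = T.root ∨ s ≤ t (T.parent v))}) := by
      intro s hs
      simp only [mem_insert, mem_singleton] at hs
      simp only [mem_filter, mem_range]
      omega
    have := card_le_card hsub
    rw [card_pair (by omega)] at this
    omega

theorem two_mul_card_le_peakMemory_mul
    (hprec : ∀ i, i ≠ T.root → t i + 1 ≤ t (T.parent i)) :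
    2 * Fintype.card T.V ≤ T.peakMemory t * (T.makespan t - 2)
      + #{v | T.parent v = T.root} + #{v | T.parent (T.parent v) = T.root} := by
  have hM : T.makespan t - 2 = t T.root - 1 := by rw [T.makespan_eq hprec]; omega
  calc 2 * Fintype.card T.V
      ≤ ∑ s ∈ range (t T.root - 1), T.memAt t s
        + #{v | T.parent v = T.root} + #{v | T.parent (T.parent v) = T.root} := by
        rw [sum_memAt_eq, card_filter, card_filter, ← sum_add_distrib, ← sum_add_distrib,
          Fintype.card_eq_sum_ones, mul_sum]
        exact sum_le_sum fun v _ => T.two_le_card_live_steps_add hprec v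
    _ ≤ _ := by
        rw [hM]
        gcongr
        exact T.sum_memAt_le_peakMemory_mul (by omega)

end InTree

theorem two_mul_sum_range_succ_sub (m : ℕ) :
    2 * ∑ i ∈ range m, (m + 1 - i) = m * (m + 3) := by
  induction m with
  | zero => simp
  | succ m ih =>
    rw [sum_range_succ', mul_add]
    simp only [Nat.add_sub_add_right, ih]
    ring_nf
    omega

theorem two_mul_card_TV (n δ : ℕ) :
    2 * Fintype.card (TV n δ) = n * ((δ - 1) * (δ + 6)) + 4 * n + 2 := by
  simp only [Fintype.card_sum, Fintype.card_sigma, Fintype.card_prod, Fintype.card_fin,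
    Fintype.card_unit, Fintype.sum_prod_type, sum_const, card_univ, smul_eq_mul,
    Fin.sum_univ_eq_sum_range (fun j => δ - j)]
  rcases δ with _ | m
  · simp; ring
  · have := two_mul_sum_range_succ_sub m
    simp only [Nat.add_sub_cancel] at this ⊢
    nlinarith

theorem sum_ite_snd_val_lt (n m k : ℕ) :
    (∑ x : Fin n × Fin m, if x.2.val < k then 1 else 0) = n * min m k := by
  rw [← Fin.card_filter_val_lt, card_filter, Fintype.sum_prod_type]
  simp

section TheTree

variable {n δ : ℕ} (hδ : 2 ≤ δ)

theorem theTree_parent_cp_eq_root_iff (p : Fin n × Fin (δ - 1)) :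
    (theTree n δ hδ).parent (Sum.inr (Sum.inl p)) = (theTree n δ hδ).root ↔ p.2.val < 1 := by
  simp only [theTree]
  split_ifs <;> simp <;> omega

theorem theTree_parent_parent_cp_eq_root_iff (p : Fin n × Fin (δ - 1)) :
    (theTree n δ hδ).parent ((theTree n δ hδ).parent (Sum.inr (Sum.inl p))) =
      (theTree n δ hδ).root ↔ p.2.val < 2 := by
  simp only [theTree]
  split_ifs <;> simp <;> omega

theorem theTree_parent_d_eq_cp (p : Fin n × Fin (δ - 1)) :
    (theTree n δ hδ).parent (Sum.inr (Sum.inr (Sum.inl p))) = Sum.inr (Sum.inl p) := rfl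

theorem theTree_card_parent_eq_root :
    #{v | (theTree n δ hδ).parent v = (theTree n δ hδ).root} = n + 1 := by
  rw [card_filter]
  change (∑ v : TV n δ,
    if (theTree n δ hδ).parent v = (theTree n δ hδ).root then 1 else 0) = _
  simp only [Fintype.sum_sum_type, theTree_parent_cp_eq_root_iff, sum_ite_snd_val_lt]
  simp [theTree, show min (δ - 1) 1 = 1 by omega, add_comm]

theorem theTree_card_parent_parent_eq_root :
    #{v | (theTree n δ hδ).parent ((theTree n δ hδ).parent v) = (theTree n δ hδ).root} =
      3 * n + 1 := by
  rw [card_filter]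
  change (∑ v : TV n δ, if (theTree n δ hδ).parent ((theTree n δ hδ).parent v) =
    (theTree n δ hδ).root then 1 else 0) = _
  simp only [Fintype.sum_sum_type, theTree_parent_d_eq_cp, theTree_parent_cp_eq_root_iff,
    theTree_parent_parent_cp_eq_root_iff, sum_ite_snd_val_lt]
  simp only [theTree]
  rcases hδ.eq_or_lt with rfl | hδ3
  · simp; ring
  · simp [show min (δ - 1) 2 = 2 by omega, show min (δ - 1) 1 = 1 by omega,
      show δ - 2 ≠ 0 by omega]
    ring

end TheTree

theorem stmt9_general (n δ : ℕ) (hδ : 2 ≤ δ) (C : ℝ) (hC : (δ : ℝ) + 2 ≤ C)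
    (t : (theTree n δ hδ).V → ℕ)
    (ht : (theTree n δ hδ).IsSchedule (Fintype.card (theTree n δ hδ).V) t)
    (hms : ((theTree n δ hδ).makespan t : ℝ) ≤ C) :
    (n : ℝ) * ((δ : ℝ)^2 + 5*(δ : ℝ) - 6) / (C - 2)
      ≤ ((theTree n δ hδ).peakMemory t : ℝ) := by
  have hcount := (theTree n δ hδ).two_mul_card_le_peakMemory_mul ht.2
  rw [theTree_card_parent_eq_root, theTree_card_parent_parent_eq_root] at hcount
  have hcard : 2 * Fintype.card (theTree n δ hδ).V = n * ((δ - 1) * (δ + 6)) + 4 * n + 2 :=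
    two_mul_card_TV n δ
  have hmem : n * ((δ - 1) * (δ + 6)) ≤
      (theTree n δ hδ).peakMemory t * ((theTree n δ hδ).makespan t - 2) := by
    omega
  have hsteps : (((theTree n δ hδ).makespan t - 2 : ℕ) : ℝ) ≤ C - 2 := by
    rcases le_or_gt 2 ((theTree n δ hδ).makespan t) with h | h
    · rw [Nat.cast_sub h]; push_cast; linarith
    · rw [Nat.sub_eq_zero_of_le h.le]; push_cast; linarith
  have hδ' : (2 : ℝ) ≤ δ := by exact_mod_cast hδ
  rw [div_le_iff₀ (by linarith)]
  calc (n : ℝ) * ((δ : ℝ)^2 + 5*(δ : ℝ) - 6)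
        = ((n * ((δ - 1) * (δ + 6)) : ℕ) : ℝ) := by
        push_cast [Nat.cast_sub (by omega : 1 ≤ δ)]; ring
    _ ≤ (theTree n δ hδ).peakMemory t * (((theTree n δ hδ).makespan t - 2 : ℕ) : ℝ) := by
        exact_mod_cast hmem
    _ ≤ (theTree n δ hδ).peakMemory t * (C - 2) := by gcongr

/-- Every schedule of `T(n, δ)` on `|V|` processors with makespan at most `C`
(where `C ≥ δ + 2`) has peak memory at least `n(δ² + 5δ − 6)/(C − 2)`. -/
theorem stmt9 (n δ : ℕ) (hn : 1 ≤ n) (hδ : 2 ≤ δ) (C : ℝ) (hC : (δ : ℝ) + 2 ≤ C)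
    (t : (theTree n δ hδ).V → ℕ)
    (ht : (theTree n δ hδ).IsSchedule (Fintype.card (theTree n δ hδ).V) t)
    (hms : ((theTree n δ hδ).makespan t : ℝ) ≤ C) :
    (n : ℝ) * ((δ : ℝ)^2 + 5*(δ : ℝ) - 6) / (C - 2)
      ≤ ((theTree n δ hδ).peakMemory t : ℝ) :=
  stmt9_general n δ hδ C hC t ht hms
end

section
/- Let p ≥ 1 and k ≥ 1 be integers and let F(p, k) be the fork tree consisting of a root whose children are p·k leaves, in the pebble-game model. Then the minimum makespan of F(p, k) over all schedules on p processors equals k + 1. Moreover, (p(k − 1) + 2)/(k + 1) → p as k → ∞; since the ParSubtrees heuristic achieves makespan p(k − 1) + 2 on F(p, k), ParSubtrees is at best a p-approximation for makespan minimization. -/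
/-- The fork tree `F` with `N` leaves: a root whose children are `N` leaves. -/
def forkTree (N : ℕ) : InTree where
  V := Unit ⊕ Fin N
  root := Sum.inl ()
  parent := fun _ => Sum.inl ()
  parent_root := rfl
  rk := fun v => match v with
    | Sum.inl _ => 0
    | Sum.inr _ => 1
  rk_lt := by rintro (u | i) h
              · cases u; exact absurd rfl h
              · simp
  rk_root := by rintro (u | i) h
                · cases u; rfl
                · simp at h

/-!
At most `p` tasks start in each step, and every task starts before the makespan, so the
`p k + 1` tasks of `F(p, k)` need a makespan of at least `k + 1`. Running the leaves in
batches of `p` during steps `0, …, k - 1` and the root at step `k` attains it. The limit is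
read off from `(p (k - 1) + 2) / (k + 1) = p + (2 - 2p) / (k + 1)`.
-/

open Finset Filter Topology

namespace InTree

variable {T : InTree}

lemma add_one_le_makespan (t : T.V → ℕ) (i : T.V) : t i + 1 ≤ T.makespan t :=
  le_sup (f := fun i => t i + 1) (mem_univ i)

lemma IsSchedule.card_le_mul_makespan {p : ℕ} {t : T.V → ℕ} (ht : T.IsSchedule p t) :
    Fintype.card T.V ≤ p * T.makespan t := by
  simpa using card_le_mul_card_image_of_maps_to (s := univ) (t := range (T.makespan t))
    (fun i _ => mem_range.2 (add_one_le_makespan t i)) p (fun s _ => ht.1 s)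

end InTree

lemma card_filter_fin_div_eq_le {p : ℕ} (hp : 0 < p) (N s : ℕ) :
    #{i : Fin N | (i : ℕ) / p = s} ≤ p := by
  calc #{i : Fin N | (i : ℕ) / p = s}
      ≤ #(Ico (s * p) (s * p + p)) := by
        refine card_le_card_of_injOn Fin.val (fun i hi => ?_) Fin.val_injective.injOn
        have := (Nat.div_eq_iff hp).1 (mem_filter.1 hi).2
        simp only [coe_Ico, Set.mem_Ico]
        omega
    _ = p := by simp

namespace forkTree

lemma card_V (N : ℕ) : Fintype.card (forkTree N).V = N + 1 := by
  rw [Fintype.card_eq_nat_card]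
  simp [forkTree, add_comm]

def batchSchedule (N p r : ℕ) : (forkTree N).V → ℕ :=
  Sum.elim (fun _ => r) (fun i : Fin N => i / p)

variable {N p r : ℕ}

lemma batchSchedule_inr_lt (hN : N ≤ p * r) (i : Fin N) :
    batchSchedule N p r (Sum.inr i) < r :=
  Nat.div_lt_of_lt_mul (i.isLt.trans_le hN)

lemma isSchedule_batchSchedule (hp : 0 < p) (hN : N ≤ p * r) :
    (forkTree N).IsSchedule p (batchSchedule N p r) := by
  refine ⟨fun s => ?_, ?_⟩
  · rcases eq_or_ne r s with rfl | hs
    · calc #{x | batchSchedule N p r x = r} ≤ #{(forkTree N).root} :=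
            card_le_card fun x hx => by
              simp only [mem_filter, mem_univ, true_and] at hx
              rcases x with ⟨⟩ | i
              · exact mem_singleton_self _
              · exact absurd hx (batchSchedule_inr_lt hN i).ne
        _ ≤ p := by rwa [card_singleton]
    · calc #{x | batchSchedule N p r x = s}
          ≤ #(({i : Fin N | (i : ℕ) / p = s} : Finset _).map Function.Embedding.inr) :=
            card_le_card fun x hx => by
              simp only [mem_filter, mem_univ, true_and] at hx
              rcases x with ⟨⟩ | i
              · exact absurd hx hs
              · exact mem_map_of_mem _ (mem_filter.2 ⟨mem_univ _, hx⟩)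
        _ ≤ p := by rw [card_map]; exact card_filter_fin_div_eq_le hp N s
  · rintro (⟨⟩ | i) hi
    · exact absurd rfl hi
    · exact batchSchedule_inr_lt hN i

lemma makespan_batchSchedule (hN : N ≤ p * r) :
    (forkTree N).makespan (batchSchedule N p r) = r + 1 := by
  refine le_antisymm (Finset.sup_le ?_)
    ((forkTree N).add_one_le_makespan (batchSchedule N p r) (Sum.inl ()))
  rintro (⟨⟩ | i) -
  · rfl
  · exact Nat.succ_le_succ (batchSchedule_inr_lt hN i).le

end forkTree

lemma tendsto_mul_sub_one_add_div_add_one (a b : ℝ) :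
    Tendsto (fun k : ℕ => (a * ((k : ℝ) - 1) + b) / ((k : ℝ) + 1)) atTop (𝓝 a) := by
  have h : Tendsto (fun k : ℕ => a + (b - 2 * a) * (1 / ((k : ℝ) + 1))) atTop
      (𝓝 (a + (b - 2 * a) * 0)) :=
    (tendsto_one_div_add_atTop_nhds_zero_nat.const_mul _).const_add a
  rw [mul_zero, add_zero] at h
  refine h.congr fun k => ?_
  field_simp
  ring

/-- In the pebble-game model, the minimum makespan of the fork tree `F(p, k)`
(a root with `p·k` leaves) over all schedules on `p` processors equals `k + 1`;
moreover `(p(k−1)+2)/(k+1) → p` as `k → ∞`, so the ParSubtrees heuristic, which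
achieves makespan `p(k−1)+2` on `F(p, k)`, is at best a `p`-approximation for
makespan minimization. -/
theorem stmt11 (p : ℕ) (hp : 1 ≤ p) :
    (∀ k : ℕ, 1 ≤ k →
      IsLeast {c : ℕ | ∃ t : (forkTree (p * k)).V → ℕ,
          (forkTree (p * k)).IsSchedule p t ∧ (forkTree (p * k)).makespan t = c}
        (k + 1)) ∧
    Filter.Tendsto (fun k : ℕ => ((p : ℝ) * ((k : ℝ) - 1) + 2) / ((k : ℝ) + 1))
      Filter.atTop (nhds (p : ℝ)) := by
  refine ⟨fun k _ => ⟨?_, ?_⟩, tendsto_mul_sub_one_add_div_add_one _ _⟩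
  · exact ⟨_, forkTree.isSchedule_batchSchedule hp le_rfl,
      forkTree.makespan_batchSchedule le_rfl⟩
  · rintro c ⟨t, ht, rfl⟩
    have hcard : p * k + 1 ≤ p * (forkTree (p * k)).makespan t :=
      forkTree.card_V (p * k) ▸ ht.card_le_mul_makespan
    exact Nat.lt_of_mul_lt_mul_left hcard
end

section
/- Let T be a finite rooted in-tree with output file sizes f : V → ℝ≥0 and execution file sizes n : V → ℝ≥0, and let v be any node of T. Then the minimum peak memory over all sequential traversals of the subtree of T rooted at v is at most the minimum peak memory over all sequential traversals of T. (Hence, in the ParSubtrees heuristic, processing any maximal subtree optimally uses no more memory than an optimal sequential processing of the whole tree.) -/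
/-- A sequential traversal of `T`: an ordering of the nodes (positions
`Fin |V|`) in which every node appears after all of its children, i.e., every
non-root node appears strictly before its parent. -/
def InTree.IsTraversal (T : InTree) (σ : Fin (Fintype.card T.V) ≃ T.V) : Prop :=
  ∀ j : T.V, j ≠ T.root → σ.symm j < σ.symm (T.parent j)

/-- Memory used while processing the node at position `k` of a traversal `σ`,
with output file sizes `f` and execution file sizes `nn`: it is
`nn(σ k) + f(σ k)` plus the sizes of the output files of all nodes processed
strictly before `σ k` whose parent is `σ k` itself or is processed strictly
after `σ k`. -/
def InTree.memOfTraversal (T : InTree) (f nn : T.V → ℝ)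
    (σ : Fin (Fintype.card T.V) ≃ T.V) (k : Fin (Fintype.card T.V)) : ℝ :=
  nn (σ k) + f (σ k) +
    ∑ j ∈ Finset.univ.filter
        (fun j : T.V => σ.symm j < k ∧ (T.parent j = σ k ∨ k < σ.symm (T.parent j))),
      f j

/-- Peak memory of a sequential traversal: the maximum, over all positions `k`,
of the memory used while processing the node at position `k`. -/
noncomputable def InTree.peakOfTraversal (T : InTree) (f nn : T.V → ℝ)
    (σ : Fin (Fintype.card T.V) ≃ T.V) : ℝ :=
  haveI : Nonempty (Fin (Fintype.card T.V)) :=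
    Fin.pos_iff_nonempty.mp (Fintype.card_pos_iff.mpr ⟨T.root⟩)
  Finset.univ.sup' Finset.univ_nonempty (T.memOfTraversal f nn σ)

/-- The subtree of `T` rooted at `v`: the node set consists of `v` and all its
descendants, with the parent relation inherited from `T`. -/
noncomputable def InTree.subtree (T : InTree) (v : T.V) : InTree where
  V := {u : T.V // ∃ k : ℕ, (T.parent)^[k] u = v}
  fin := by
    classical
    exact Subtype.fintype _
  deq := Subtype.instDecidableEq
  root := ⟨v, 0, rfl⟩
  parent := fun u =>
    if h : (u : T.V) = v then ⟨v, 0, rfl⟩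
    else
      ⟨T.parent u, by
        obtain ⟨k, hk⟩ := u.2
        match k, hk with
        | 0, hk => exact absurd hk h
        | (k+1), hk =>
          exact ⟨k, (Function.iterate_succ_apply T.parent k u.1).symm.trans hk⟩⟩
  parent_root := by simp
  rk := fun u => T.rk u
  rk_lt := by
    rintro ⟨u, k, hk⟩ h
    have huv : u ≠ v := by
      intro h'
      exact h (Subtype.ext h')
    have hur : u ≠ T.root := by
      intro h'
      subst h'
      rw [Function.iterate_fixed T.parent_root] at hk
      exact huv hk
    simp only [dif_neg huv]
    exact T.rk_lt u hur
  rk_root := by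
    rintro ⟨u, k, hk⟩ h
    have hur : u = T.root := T.rk_root u h
    subst hur
    rw [Function.iterate_fixed T.parent_root] at hk
    exact Subtype.ext hk

/-! Restricting any traversal of `T` to the subtree rooted at `v` (keeping the relative
order of its nodes) gives a traversal of the subtree. While it processes a node `u`, the files
held in memory form a subset of those held when the traversal of `T` processes `u`, so with
nonnegative file sizes its peak memory is no larger. -/

lemma exists_equiv_fin_monotone {W β : Type*} [Fintype W] [LinearOrder β] (g : W → β) :
    ∃ τ : Fin (Fintype.card W) ≃ W, Monotone (g ∘ τ) := by
  let e := (Fintype.equivFin W).symm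
  exact ⟨(Tuple.sort (g ∘ e)).trans e, Tuple.monotone_sort (g ∘ e)⟩

lemma exists_equiv_fin_symm_lt_iff {W β : Type*} [Fintype W] [LinearOrder β] {g : W → β}
    (hg : Function.Injective g) :
    ∃ τ : Fin (Fintype.card W) ≃ W, ∀ a b, τ.symm a < τ.symm b ↔ g a < g b := by
  obtain ⟨τ, hτ⟩ := exists_equiv_fin_monotone g
  have hmono : StrictMono (g ∘ τ) := hτ.strictMono_of_injective (hg.comp τ.injective)
  refine ⟨τ, fun a b => ?_⟩
  simpa using (hmono.lt_iff_lt (a := τ.symm a) (b := τ.symm b)).symm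

namespace InTree

lemma exists_isTraversal (T : InTree) : ∃ σ, T.IsTraversal σ := by
  obtain ⟨σ, hσ⟩ := exists_equiv_fin_monotone (OrderDual.toDual ∘ T.rk)
  refine ⟨σ, fun j hj => lt_of_not_ge fun hle => ?_⟩
  have hrk : T.rk (T.parent j) ≥ T.rk j := by simpa using hσ hle
  exact hrk.not_gt (T.rk_lt j hj)

section Subtree

variable {T : InTree} {v : T.V}

lemma subtree_parent_val {j : (T.subtree v).V} (hj : j.1 ≠ v) :
    ((T.subtree v).parent j).1 = T.parent j.1 := by
  simp [InTree.subtree, hj]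

lemma ne_root_of_subtree {j : (T.subtree v).V} (hj : j.1 ≠ v) : j.1 ≠ T.root := by
  obtain ⟨u, k, hk⟩ := j
  rintro rfl
  rw [Function.iterate_fixed T.parent_root] at hk
  exact hj hk

variable {σ : Fin (Fintype.card T.V) ≃ T.V} {τ : Fin (Fintype.card (T.subtree v).V) ≃ (T.subtree v).V}

lemma IsTraversal.subtree (hσ : T.IsTraversal σ)
    (hord : ∀ a b, τ.symm a < τ.symm b ↔ σ.symm a.1 < σ.symm b.1) :
    (T.subtree v).IsTraversal τ := by
  intro j hj
  have hjv : j.1 ≠ v := fun h => hj (Subtype.ext h)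
  rw [hord, subtree_parent_val hjv]
  exact hσ j.1 (ne_root_of_subtree hjv)

lemma memOfTraversal_subtree_le {f : T.V → ℝ} (nn : T.V → ℝ) (hf : ∀ i, 0 ≤ f i)
    (hord : ∀ a b, τ.symm a < τ.symm b ↔ σ.symm a.1 < σ.symm b.1) (k : Fin _) :
    (T.subtree v).memOfTraversal (fun u => f u.1) (fun u => nn u.1) τ k
      ≤ T.memOfTraversal f nn σ (σ.symm (τ k).1) := by
  let val : (T.subtree v).V ↪ T.V := ⟨fun u => u.1, fun _ _ => Subtype.ext⟩
  obtain ⟨u, rfl⟩ := τ.symm.surjective k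
  unfold memOfTraversal
  simp only [Equiv.apply_symm_apply]
  refine add_le_add_right ((Finset.sum_map _ val f).symm.trans_le ?_) _
  refine Finset.sum_le_sum_of_subset_of_nonneg (fun x hx => ?_) fun i _ _ => hf i
  simp only [Finset.mem_map, Finset.mem_filter, Finset.mem_univ, true_and] at hx ⊢
  obtain ⟨j, ⟨hju, hpar⟩, rfl⟩ := hx
  have hjv : j.1 ≠ v := by
    intro h
    have hroot : (T.subtree v).parent j = j := by
      rw [show j = (T.subtree v).root from Subtype.ext h, parent_root]
    rw [hroot] at hpar
    rcases hpar with rfl | hpar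
    · exact hju.false
    · exact hju.asymm hpar
  show σ.symm j.1 < σ.symm u.1 ∧ (T.parent j.1 = u.1 ∨ σ.symm u.1 < σ.symm (T.parent j.1))
  rw [← subtree_parent_val hjv, ← hord, ← hord]
  exact ⟨hju, hpar.imp (congrArg Subtype.val) id⟩

lemma peakOfTraversal_subtree_le {f : T.V → ℝ} (nn : T.V → ℝ) (hf : ∀ i, 0 ≤ f i)
    (hord : ∀ a b, τ.symm a < τ.symm b ↔ σ.symm a.1 < σ.symm b.1) :
    (T.subtree v).peakOfTraversal (fun u => f u.1) (fun u => nn u.1) τ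
      ≤ T.peakOfTraversal f nn σ :=
  Finset.sup'_le _ _ fun k _ =>
    (memOfTraversal_subtree_le nn hf hord k).trans (Finset.le_sup' _ (Finset.mem_univ _))

end Subtree

end InTree

theorem stmt12_general (T : InTree) (f nn : T.V → ℝ)
    (hf : ∀ i, 0 ≤ f i) (v : T.V) :
    sInf {M : ℝ | ∃ σ : Fin (Fintype.card (T.subtree v).V) ≃ (T.subtree v).V,
        (T.subtree v).IsTraversal σ ∧
        (T.subtree v).peakOfTraversal (fun u => f u.1) (fun u => nn u.1) σ = M}
      ≤ sInf {M : ℝ | ∃ σ : Fin (Fintype.card T.V) ≃ T.V,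
        T.IsTraversal σ ∧ T.peakOfTraversal f nn σ = M} := by
  obtain ⟨σ₀, hσ₀⟩ := T.exists_isTraversal
  refine le_csInf ⟨_, σ₀, hσ₀, rfl⟩ ?_
  rintro _ ⟨σ, hσ, rfl⟩
  obtain ⟨τ, hord⟩ := exists_equiv_fin_symm_lt_iff (W := (T.subtree v).V)
    (σ.symm.injective.comp Subtype.val_injective)
  have hfinite : Set.Finite {M : ℝ | ∃ τ, (T.subtree v).IsTraversal τ ∧
      (T.subtree v).peakOfTraversal (fun u => f u.1) (fun u => nn u.1) τ = M} :=
    (Set.finite_range _).subset fun _ ⟨τ, _, hM⟩ => ⟨τ, hM⟩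
  exact csInf_le_of_le hfinite.bddBelow ⟨τ, hσ.subtree hord, rfl⟩
    (InTree.peakOfTraversal_subtree_le nn hf hord)

/-- The minimum peak memory over all sequential traversals of the subtree of
`T` rooted at any node `v` is at most the minimum peak memory over all
sequential traversals of `T` itself. -/
theorem stmt12 (T : InTree) (f nn : T.V → ℝ)
    (hf : ∀ i, 0 ≤ f i) (hnn : ∀ i, 0 ≤ nn i) (v : T.V) :
    sInf {M : ℝ | ∃ σ : Fin (Fintype.card (T.subtree v).V) ≃ (T.subtree v).V,
        (T.subtree v).IsTraversal σ ∧
        (T.subtree v).peakOfTraversal (fun u => f u.1) (fun u => nn u.1) σ = M}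
      ≤ sInf {M : ℝ | ∃ σ : Fin (Fintype.card T.V) ≃ T.V,
        T.IsTraversal σ ∧ T.peakOfTraversal f nn σ = M} :=
  stmt12_general T f nn hf v
end
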